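/- arXiv:1811.01230 — 4 statements merged into one kernel-verified Lean document; each statement's English description precedes it below -/
import Mathlib

section
/- Let R be a commutative unital ring, n ≥ 3, and (c₁, c₂, ..., cₙ) a unimodular row over R. If u ∈ R is a unit modulo the ideal c₃R + ... + cₙR, then (c₁, c₂, c₃, ..., cₙ) and (u·c₁, u·c₂, c₃, ..., cₙ) lie in the same orbit under the right action of the elementary subgroup Eₙ(R). -/
open Matrix Polynomial

/-- The set of elementary matrices (transvections) over a commutative ring. -/
def ElemSet (ι R : Type) [Fintype ι] [DecidableEq ι] [CommRing R] :
    Set (Matrix ι ι R) :=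
  { M | ∃ i j : ι, ∃ a : R, i ≠ j ∧ M = Matrix.transvection i j a }

/-- The elementary subgroup `E_n(R)`, as the multiplicative closure of the
elementary matrices (it is closed under inverses, hence a group). -/
def Elem (ι R : Type) [Fintype ι] [DecidableEq ι] [CommRing R] :
    Submonoid (Matrix ι ι R) :=
  Submonoid.closure (ElemSet ι R)

/-- A row is unimodular if its entries generate the unit ideal. -/
def IsUnimodular {ι R : Type} [CommRing R] (v : ι → R) : Prop :=
  Ideal.span (Set.range v) = ⊤

/-- Two rows are equivalent under the elementary group if one is obtained from
the other by right multiplication by an element of `E_n(R)`. -/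
def RowEquivE {ι R : Type} [Fintype ι] [DecidableEq ι] [CommRing R]
    (v w : ι → R) : Prop :=
  ∃ E ∈ Elem ι R, Matrix.vecMul v E = w

/-!
Let `J = (c₃, …, cₙ)`. For indices `i₀, i₁, i₂` and `p, q ∈ R²` with `q ⬝ p = 0`, the commutator of
"add `x₀ p₀ + x₁ p₁` to `x₂`" and "add `x₂ q` to `(x₀, x₁)`" is elementary and changes the row only
by `(x₀, x₁) ↦ (x₀, x₁) + (x ⬝ p) q`. Adding multiples of `c₃, …, cₙ` moves the first two entries
freely within their classes modulo `J`, so it suffices to reach `(u c₁, u c₂)` modulo `J`.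
With `r c₁ + s c₂ ≡ 1` and `u w ≡ 1` modulo `J`, three such commutators do this:
`(c₁, c₂) ↦ (c₁ - s, c₂ + r) ↦ (u c₁ - s, u c₂ + r) ↦ (u c₁, u c₂)`.
-/

open Function

theorem Function.image_update_update_compl {ι α : Type*} [DecidableEq ι] {i₀ i₁ : ι}
    (v : ι → α) (a b : α) : update (update v i₀ a) i₁ b '' {i₀, i₁}ᶜ = v '' {i₀, i₁}ᶜ :=
  Set.image_congr fun k hk ↦ by
    simp only [Set.mem_compl_iff, Set.mem_insert_iff, Set.mem_singleton_iff, not_or] at hk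
    rw [update_of_ne hk.2, update_of_ne hk.1]

theorem IsUnimodular.exists_mk_add_mul_eq_one {ι R : Type} [CommRing R] {v : ι → R}
    (hv : IsUnimodular v) (i₀ i₁ : ι) :
    ∃ r s : R, Ideal.Quotient.mk (Ideal.span (v '' {i₀, i₁}ᶜ)) (v i₀ * r + v i₁ * s) = 1 := by
  have h : (1 : R) ∈ Ideal.span {v i₀, v i₁} ⊔ Ideal.span (v '' {i₀, i₁}ᶜ) := by
    rw [← Set.image_pair, ← Ideal.span_union, ← Set.image_union, Set.union_compl_self,
      Set.image_univ, hv]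
    trivial
  obtain ⟨y, hy, z, hz, hyz⟩ := Submodule.mem_sup.mp h
  obtain ⟨r, s, rfl⟩ := Ideal.mem_span_pair.mp hy
  refine ⟨r, s, ?_⟩
  rw [← map_one (Ideal.Quotient.mk _), Ideal.Quotient.eq]
  convert neg_mem hz using 1
  linear_combination hyz

section

variable {ι R : Type} [Fintype ι] [DecidableEq ι] [CommRing R] {i₀ i₁ i₂ : ι}

theorem vecMul_transvection (x : ι → R) (i j : ι) (c : R) :
    x ᵥ* transvection i j c = update x j (x j + x i * c) := by
  ext k
  rcases eq_or_ne k j with rfl | hk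
  · simp [transvection, vecMul, dotProduct, single_apply, one_apply, mul_add,
      Finset.sum_add_distrib, add_comm]
  · simp [transvection, vecMul, dotProduct, one_apply, hk, Ne.symm hk]

theorem transvection_mem_elem {i j : ι} (hij : i ≠ j) (c : R) : transvection i j c ∈ Elem ι R :=
  Submonoid.subset_closure ⟨i, j, c, hij, rfl⟩

namespace RowEquivE

theorem refl (x : ι → R) : RowEquivE x x :=
  ⟨1, one_mem _, vecMul_one x⟩

theorem trans {x y z : ι → R} (hxy : RowEquivE x y) (hyz : RowEquivE y z) : RowEquivE x z := by
  obtain ⟨E, hE, rfl⟩ := hxy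
  obtain ⟨F, hF, rfl⟩ := hyz
  exact ⟨E * F, mul_mem hE hF, (vecMul_vecMul x E F).symm⟩

theorem update_add_mul (x : ι → R) {i j : ι} (hij : i ≠ j) (c : R) :
    RowEquivE x (update x j (x j + x i * c)) :=
  ⟨_, transvection_mem_elem hij c, vecMul_transvection x i j c⟩

theorem update_add_of_mem_span {S : Set ι} {i : ι} (hi : i ∉ S) {x : ι → R} {t : R}
    (ht : t ∈ Ideal.span (x '' S)) : RowEquivE x (update x i (x i + t)) := by
  suffices ∀ y : ι → R, (∀ j ∈ S, y j = x j) → ∀ a, RowEquivE y (update y i (y i + a * t)) by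
    simpa using this x (fun _ _ ↦ rfl) 1
  induction ht using Submodule.span_induction with
  | mem _ h =>
    obtain ⟨j, hj, rfl⟩ := h
    intro y hy a
    rw [mul_comm, ← hy j hj]
    exact update_add_mul y (ne_of_mem_of_not_mem hj hi) a
  | zero => exact fun y _ _ ↦ by simpa using refl y
  | add t₁ t₂ _ _ ih₁ ih₂ =>
    intro y hy a
    refine (ih₁ y hy a).trans ?_
    have hy' : ∀ j ∈ S, update y i (y i + a * t₁) j = x j := fun j hj ↦ by
      rw [update_of_ne (ne_of_mem_of_not_mem hj hi), hy j hj]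
    simpa [mul_add, add_assoc] using ih₂ _ hy' a
  | smul b t _ ih =>
    intro y hy a
    simpa [mul_assoc] using ih y hy (a * b)

theorem update_update_of_dot_eq_zero (h₀₁ : i₀ ≠ i₁) (h₀₂ : i₀ ≠ i₂)
    (h₁₂ : i₁ ≠ i₂) (x : ι → R) {p₀ p₁ q₀ q₁ : R} (hpq : q₀ * p₀ + q₁ * p₁ = 0) :
    RowEquivE x (update (update x i₀ (x i₀ + (x i₀ * p₀ + x i₁ * p₁) * q₀)) i₁
      (x i₁ + (x i₀ * p₀ + x i₁ * p₁) * q₁)) := by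
  refine ⟨transvection i₀ i₂ p₀ * transvection i₁ i₂ p₁ *
      (transvection i₂ i₀ q₀ * transvection i₂ i₁ q₁) *
      (transvection i₀ i₂ (-p₀) * transvection i₁ i₂ (-p₁)) *
      (transvection i₂ i₀ (-q₀) * transvection i₂ i₁ (-q₁)), ?_, ?_⟩
  · have hT : ∀ {i j : ι}, i ≠ j → ∀ c : R, transvection i j c ∈ Elem ι R :=
      fun h c ↦ transvection_mem_elem h c
    exact mul_mem (mul_mem (mul_mem (mul_mem (hT h₀₂ _) (hT h₁₂ _))
      (mul_mem (hT h₀₂.symm _) (hT h₁₂.symm _))) (mul_mem (hT h₀₂ _) (hT h₁₂ _)))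
      (mul_mem (hT h₀₂.symm _) (hT h₁₂.symm _))
  · simp only [← vecMul_vecMul, vecMul_transvection]
    ext k
    set D := x i₀ * p₀ + x i₁ * p₁
    rcases eq_or_ne k i₀ with rfl | hk₀
    · simp only [update_self, update_of_ne, update_idem, ne_eq, not_false_eq_true, h₀₁, h₀₂,
        h₁₂, h₀₁.symm, h₀₂.symm, h₁₂.symm]
      linear_combination q₀ * (x i₂ + D) * hpq
    rcases eq_or_ne k i₁ with rfl | hk₁
    · simp only [update_self, update_of_ne, update_idem, ne_eq, not_false_eq_true, h₀₁, h₀₂,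
        h₁₂, h₀₁.symm, h₀₂.symm, h₁₂.symm]
      linear_combination q₁ * (x i₂ + D) * hpq
    rcases eq_or_ne k i₂ with rfl | hk₂
    · simp only [update_self, update_of_ne, update_idem, ne_eq, not_false_eq_true, h₀₁, h₀₂,
        h₁₂, h₀₁.symm, h₀₂.symm, h₁₂.symm]
      linear_combination -(x k + D) * hpq
    · simp [hk₀, hk₁, hk₂]

theorem update_update_of_sub_mem (h₀₁ : i₀ ≠ i₁) (v : ι → R) {α β α' β' : R}
    (hα : α' - α ∈ Ideal.span (v '' {i₀, i₁}ᶜ)) (hβ : β' - β ∈ Ideal.span (v '' {i₀, i₁}ᶜ)) :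
    RowEquivE (update (update v i₀ α) i₁ β) (update (update v i₀ α') i₁ β') := by
  have hi₀ : i₀ ∉ ({i₀, i₁}ᶜ : Set ι) := by simp
  have hi₁ : i₁ ∉ ({i₀, i₁}ᶜ : Set ι) := by simp
  rw [← image_update_update_compl v α β] at hα
  rw [← image_update_update_compl v α' β] at hβ
  have step₀ := update_add_of_mem_span hi₀ hα
  have step₁ := update_add_of_mem_span hi₁ hβ
  simp only [update_self, update_of_ne h₀₁, add_sub_cancel, update_idem] at step₀ step₁
  rw [update_comm h₀₁.symm, update_idem] at step₀
  exact step₀.trans step₁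

theorem update_update_of_mk_eq (h₀₁ : i₀ ≠ i₁) (h₀₂ : i₀ ≠ i₂) (h₁₂ : i₁ ≠ i₂)
    (v : ι → R) {α β α' β' p₀ p₁ q₀ q₁ : R} (hpq : q₀ * p₀ + q₁ * p₁ = 0)
    (hα : Ideal.Quotient.mk (Ideal.span (v '' {i₀, i₁}ᶜ)) α' =
      Ideal.Quotient.mk (Ideal.span (v '' {i₀, i₁}ᶜ)) (α + (α * p₀ + β * p₁) * q₀))
    (hβ : Ideal.Quotient.mk (Ideal.span (v '' {i₀, i₁}ᶜ)) β' =
      Ideal.Quotient.mk (Ideal.span (v '' {i₀, i₁}ᶜ)) (β + (α * p₀ + β * p₁) * q₁)) :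
    RowEquivE (update (update v i₀ α) i₁ β) (update (update v i₀ α') i₁ β') := by
  have h := update_update_of_dot_eq_zero h₀₁ h₀₂ h₁₂ (update (update v i₀ α) i₁ β) hpq
  simp only [update_self, update_of_ne h₀₁] at h
  rw [update_comm h₀₁.symm, update_idem, update_idem] at h
  exact h.trans <|
    update_update_of_sub_mem h₀₁ v (Ideal.Quotient.eq.mp hα) (Ideal.Quotient.eq.mp hβ)

theorem update_update_mul_of_isUnit (h₀₁ : i₀ ≠ i₁) (h₀₂ : i₀ ≠ i₂) (h₁₂ : i₁ ≠ i₂) {v : ι → R}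
    (hv : IsUnimodular v) {u : R}
    (hu : IsUnit (Ideal.Quotient.mk (Ideal.span (v '' {i₀, i₁}ᶜ)) u)) :
    RowEquivE v (update (update v i₀ (u * v i₀)) i₁ (u * v i₁)) := by
  set π := Ideal.Quotient.mk (Ideal.span (v '' {i₀, i₁}ᶜ))
  obtain ⟨r, s, hrs⟩ := hv.exists_mk_add_mul_eq_one i₀ i₁
  obtain ⟨w, huw⟩ : ∃ w, π u * π w = 1 := by
    obtain ⟨w', hw'⟩ := hu.exists_right_inv
    obtain ⟨w, rfl⟩ := Ideal.Quotient.mk_surjective w'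
    exact ⟨w, hw'⟩
  set a := v i₀
  set b := v i₁
  simp only [map_add, map_mul] at hrs
  have h₁ : RowEquivE (update (update v i₀ a) i₁ b) (update (update v i₀ (a - s)) i₁ (b + r)) :=
    update_update_of_mk_eq h₀₁ h₀₂ h₁₂ v (p₀ := r) (p₁ := s) (q₀ := -s) (q₁ := r) (by ring)
      (by simp only [map_add, map_sub, map_mul, map_neg]; linear_combination π s * hrs)
      (by simp only [map_add, map_mul]; linear_combination -π r * hrs)
  have h₂ : RowEquivE (update (update v i₀ (a - s)) i₁ (b + r))
      (update (update v i₀ (u * a - s)) i₁ (u * b + r)) :=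
    update_update_of_mk_eq h₀₁ h₀₂ h₁₂ v (p₀ := -((u - 1) * b)) (p₁ := (u - 1) * a) (q₀ := a)
      (q₁ := b) (by ring)
      (by simp only [map_add, map_sub, map_mul, map_neg, map_one]
          linear_combination -(π u - 1) * π a * hrs)
      (by simp only [map_add, map_sub, map_mul, map_neg, map_one]
          linear_combination -(π u - 1) * π b * hrs)
  have h₃ : RowEquivE (update (update v i₀ (u * a - s)) i₁ (u * b + r))
      (update (update v i₀ (u * a)) i₁ (u * b)) :=
    update_update_of_mk_eq h₀₁ h₀₂ h₁₂ v (p₀ := -(w * r)) (p₁ := -(w * s)) (q₀ := -s) (q₁ := r)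
      (by ring)
      (by simp only [map_add, map_sub, map_mul, map_neg]
          linear_combination -(π s * π w * π u) * hrs - π s * huw)
      (by simp only [map_add, map_sub, map_mul, map_neg]
          linear_combination π r * π w * π u * hrs + π r * huw)
  simpa [a, b] using h₁.trans (h₂.trans h₃)

end RowEquivE

end

theorem stmt_0 {R : Type} [CommRing R] (n : ℕ) (hn : 3 ≤ n)
    (v : Fin n → R) (hv : IsUnimodular v) (u : R)
    (hu : IsUnit (Ideal.Quotient.mk (Ideal.span (v '' {i | 2 ≤ i.val})) u)) :
    RowEquivE v (fun i => if i.val ≤ 1 then u * v i else v i) := by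
  let i₀ : Fin n := ⟨0, by omega⟩
  let i₁ : Fin n := ⟨1, by omega⟩
  let i₂ : Fin n := ⟨2, by omega⟩
  have hS : {i : Fin n | 2 ≤ i.val} = {i₀, i₁}ᶜ := by
    ext i
    simp only [Set.mem_ofPred_eq, Set.mem_compl_iff, Set.mem_insert_iff, Set.mem_singleton_iff,
      Fin.ext_iff, i₀, i₁]
    omega
  rw [hS] at hu
  convert RowEquivE.update_update_mul_of_isUnit (i₂ := i₂) (by simp [i₀, i₁, Fin.ext_iff])
    (by simp [i₀, i₂, Fin.ext_iff]) (by simp [i₁, i₂, Fin.ext_iff]) hv hu using 1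
  ext ⟨k, hk⟩
  rcases k with _ | _ | k <;> simp [i₀, i₁]
end

section
/- Let R be a commutative unital ring, e(x) ∈ R[x] with deg e(x) ≥ 1 and e(0) a unit, and let s₁, s₂, k be positive integers with s₁, s₂ ≥ k. If (x^{s₁}·f₁(x), x^{s₂}·f₂(x), e(x)) is a unimodular row over R[x], then it is equivalent under E₃(R[x]) to (x^{s₁−k}·f₁(x), x^{s₂−k}·f₂(x), e(x)). -/
open Matrix Polynomial

section Aux

variable {S : Type} [CommRing S]

private lemma rowEquivE_trans {u v w : Fin 3 → S} (h1 : RowEquivE u v) (h2 : RowEquivE v w) :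
    RowEquivE u w := by
  obtain ⟨E1, hE1, r1⟩ := h1
  obtain ⟨E2, hE2, r2⟩ := h2
  exact ⟨E1 * E2, mul_mem hE1 hE2, by rw [← Matrix.vecMul_vecMul, r1, r2]⟩

private lemma trans_mem {i j : Fin 3} (hij : i ≠ j) (m : S) :
    Matrix.transvection i j m ∈ Elem (Fin 3) S :=
  Submonoid.subset_closure ⟨i, j, m, hij, rfl⟩

set_option linter.unnecessarySeqFocus false in
private lemma step20 (a b c m z : S) (hz : z = a + m * c) :
    RowEquivE ![a, b, c] ![z, b, c] := by
  refine ⟨Matrix.transvection 2 0 m, trans_mem (by decide) m, ?_⟩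
  subst hz
  funext k
  fin_cases k <;>
    simp [Matrix.vecMul, Matrix.transvection, Matrix.single, dotProduct,
      Fin.sum_univ_three, Matrix.one_apply] <;> ring

set_option linter.unnecessarySeqFocus false in
private lemma step21 (a b c m z : S) (hz : z = b + m * c) :
    RowEquivE ![a, b, c] ![a, z, c] := by
  refine ⟨Matrix.transvection 2 1 m, trans_mem (by decide) m, ?_⟩
  subst hz
  funext k
  fin_cases k <;>
    simp [Matrix.vecMul, Matrix.transvection, Matrix.single, dotProduct,
      Fin.sum_univ_three, Matrix.one_apply] <;> ring

set_option linter.unnecessarySeqFocus false in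
private lemma step02 (a b c m z : S) (hz : z = c + m * a) :
    RowEquivE ![a, b, c] ![a, b, z] := by
  refine ⟨Matrix.transvection 0 2 m, trans_mem (by decide) m, ?_⟩
  subst hz
  funext k
  fin_cases k <;>
    simp [Matrix.vecMul, Matrix.transvection, Matrix.single, dotProduct,
      Fin.sum_univ_three, Matrix.one_apply] <;> ring

set_option linter.unnecessarySeqFocus false in
private lemma step12 (a b c m z : S) (hz : z = c + m * b) :
    RowEquivE ![a, b, c] ![a, b, z] := by
  refine ⟨Matrix.transvection 1 2 m, trans_mem (by decide) m, ?_⟩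
  subst hz
  funext k
  fin_cases k <;>
    simp [Matrix.vecMul, Matrix.transvection, Matrix.single, dotProduct,
      Fin.sum_univ_three, Matrix.one_apply] <;> ring

/-- Vaserstein's gadget: if `b*r2 - c*r1 = 1 + s*a`, then we may add `l*r1, l*r2`
to the first two entries keeping the pivot `a` fixed, by elementary operations. -/
private lemma gadget (b c a r1 r2 s l b' c' : S)
    (h : b * r2 - c * r1 = 1 + s * a)
    (hb : b' = b + l * r1) (hc : c' = c + l * r2) :
    RowEquivE ![b, c, a] ![b', c', a] := by
  refine rowEquivE_trans (step02 b c a r2 _ rfl) ?_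
  refine rowEquivE_trans (step12 b c (a + r2 * b) (-r1) (1 + (1 + s) * a)
    (by linear_combination -h)) ?_
  refine rowEquivE_trans (step20 b c (1 + (1 + s) * a) (l * r1)
    (b + l * r1 * (1 + (1 + s) * a)) (by ring)) ?_
  refine rowEquivE_trans (step21 (b + l * r1 * (1 + (1 + s) * a)) c (1 + (1 + s) * a) (l * r2)
    (c + l * r2 * (1 + (1 + s) * a)) (by ring)) ?_
  refine rowEquivE_trans (step02 (b + l * r1 * (1 + (1 + s) * a))
    (c + l * r2 * (1 + (1 + s) * a)) (1 + (1 + s) * a) (-r2)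
    ((1 + (1 + s) * a) + (-r2) * (b + l * r1 * (1 + (1 + s) * a))) rfl) ?_
  refine rowEquivE_trans (step12 (b + l * r1 * (1 + (1 + s) * a))
    (c + l * r2 * (1 + (1 + s) * a)) _ r1 a (by linear_combination h)) ?_
  refine rowEquivE_trans (step20 (b + l * r1 * (1 + (1 + s) * a))
    (c + l * r2 * (1 + (1 + s) * a)) a (-(l * r1 * (1 + s))) b'
    (by rw [hb]; ring)) ?_
  exact step21 b' (c + l * r2 * (1 + (1 + s) * a)) a (-(l * r2 * (1 + s))) c'
    (by rw [hc]; ring)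

/-- Key lemma: if `y` is invertible modulo `e` (witnessed by `y*τ = 1 + e*g`) and the row
`(y*p', y*q', e)` is unimodular (witnessed by a certificate), then the common factor `y`
of the first two entries can be removed by elementary operations. -/
private lemma key (y τ e g p' q' α β γ : S)
    (hyt : y * τ = 1 + e * g)
    (hcert : α * (y * p') + β * (y * q') + γ * e = 1) :
    RowEquivE ![y * p', y * q', e] ![p', q', e] := by
  refine rowEquivE_trans (gadget (y * p') (y * q') e (-β) α (-γ) (-1)
    (y * p' + β) (y * q' - α) (by linear_combination hcert) (by ring) (by ring)) ?_
  refine rowEquivE_trans (gadget (y * p' + β) (y * q' - α) e (y * p') (y * q') (-γ) (-1)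
    β (-α) (by linear_combination hcert) (by ring) (by ring)) ?_
  refine rowEquivE_trans (gadget β (-α) e (y * p') (y * q') (-γ) τ
    (β + τ * (y * p')) (-α + τ * (y * q')) (by linear_combination hcert)
    (by ring) (by ring)) ?_
  refine rowEquivE_trans (gadget (β + τ * (y * p')) (-α + τ * (y * q')) e
    (y * p' - y * (β + τ * (y * p'))) (y * q' - y * (-α + τ * (y * q'))) (-γ) τ
    (p' + e * (g * (p' - β - τ * (y * p'))))
    (q' + e * (g * (q' + α - τ * (y * q'))))
    (by linear_combination hcert)
    (by linear_combination (β + p' * (τ * y - 1)) * hyt)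
    (by linear_combination (-α + q' * (τ * y - 1)) * hyt)) ?_
  refine rowEquivE_trans (step20 (p' + e * (g * (p' - β - τ * (y * p'))))
    (q' + e * (g * (q' + α - τ * (y * q')))) e
    (-(g * (p' - β - τ * (y * p')))) p' (by ring)) ?_
  exact step21 p' (q' + e * (g * (q' + α - τ * (y * q')))) e
    (-(g * (q' + α - τ * (y * q')))) q' (by ring)

end Aux

theorem stmt_2 {R : Type} [CommRing R] (e f₁ f₂ : R[X]) (he : 1 ≤ e.natDegree)
    (h0 : IsUnit (e.coeff 0)) (s₁ s₂ k : ℕ) (hk : 1 ≤ k)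
    (hs₁ : k ≤ s₁) (hs₂ : k ≤ s₂)
    (hum : IsUnimodular ![X ^ s₁ * f₁, X ^ s₂ * f₂, e]) :
    RowEquivE ![X ^ s₁ * f₁, X ^ s₂ * f₂, e]
      ![X ^ (s₁ - k) * f₁, X ^ (s₂ - k) * f₂, e] := by
  classical
  obtain ⟨v, hv⟩ := h0.exists_right_inv
  have hXd : X * e.divX + C (e.coeff 0) = e := X_mul_divX_add e
  have hCv : C (e.coeff 0) * C v = (1 : R[X]) := by rw [← C_mul, hv, C_1]
  set t : R[X] := -(C v * e.divX) with ht
  have hxt : X * t = 1 - C v * e := by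
    rw [ht]; linear_combination (-(C v)) * hXd + hCv
  obtain ⟨g, hg⟩ : ∃ g : R[X], X ^ k * t ^ k = 1 + e * g := by
    have H : ∀ n : ℕ, ∃ g : R[X], ((1 : R[X]) - C v * e) ^ n = 1 + e * g := by
      intro n
      induction n with
      | zero => exact ⟨0, by ring⟩
      | succ n ih =>
          obtain ⟨g, hgn⟩ := ih
          exact ⟨g - C v - e * g * C v, by rw [pow_succ, hgn]; ring⟩
    obtain ⟨g, hgk⟩ := H k
    exact ⟨g, by rw [← mul_pow, hxt, hgk]⟩
  have h1 : (1 : R[X]) ∈ Ideal.span (Set.range ![X ^ s₁ * f₁, X ^ s₂ * f₂, e]) :=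
    hum ▸ Submodule.mem_top
  rw [Ideal.span, Submodule.mem_span_range_iff_exists_fun] at h1
  obtain ⟨c, hc⟩ := h1
  simp only [Fin.sum_univ_three, smul_eq_mul, Matrix.cons_val_zero, Matrix.cons_val_one,
    Matrix.head_cons, Matrix.cons_val_two, Matrix.tail_cons] at hc
  have e1 : X ^ s₁ * f₁ = X ^ k * (X ^ (s₁ - k) * f₁) := by
    rw [← mul_assoc, ← pow_add, Nat.add_sub_cancel' hs₁]
  have e2 : X ^ s₂ * f₂ = X ^ k * (X ^ (s₂ - k) * f₂) := by
    rw [← mul_assoc, ← pow_add, Nat.add_sub_cancel' hs₂]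
  rw [show (![X ^ s₁ * f₁, X ^ s₂ * f₂, e] : Fin 3 → R[X])
      = ![X ^ k * (X ^ (s₁ - k) * f₁), X ^ k * (X ^ (s₂ - k) * f₂), e] from by rw [e1, e2]]
  exact key (X ^ k) (t ^ k) e g (X ^ (s₁ - k) * f₁) (X ^ (s₂ - k) * f₂)
    (c 0) (c 1) (c 2) hg (by rw [← e1, ← e2]; linear_combination hc)
end

section
/- Let R be a commutative unital ring and g(x) ∈ R[x] of degree n > 0 with g(0) a unit in R. Then for any f(x) ∈ R[x] and any integer k ≥ deg f(x) − deg g(x) + 1, there exists h(x) ∈ R[x] of degree < n such that f(x) ≡ x^k · h(x) modulo the ideal g(x)·R[x]. -/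
open Matrix Polynomial

theorem stmt_4 {R : Type} [CommRing R] (g : R[X]) (hg : 0 < g.natDegree)
    (h0 : IsUnit (g.coeff 0)) (f : R[X]) (k : ℕ)
    (hk : f.natDegree + 1 ≤ k + g.natDegree) :
    ∃ h : R[X], h.degree < (g.natDegree : WithBot ℕ) ∧
      f - X ^ k * h ∈ Ideal.span {g} := by
  induction k generalizing f with
  | zero =>
    refine ⟨f, ?_, by simp⟩
    rcases eq_or_ne f 0 with rfl | hf
    · rw [Polynomial.degree_zero]; exact WithBot.bot_lt_coe _
    · exact (natDegree_lt_iff_degree_lt hf).mp (by omega)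
  | succ k ih =>
    obtain ⟨w, hw⟩ := h0
    set v : R := ((w⁻¹ : Rˣ) : R) with hvdef
    have hv1 : C v * C (g.coeff 0) = 1 := by
      rw [← C_mul, ← hw, hvdef, Units.inv_mul, C_1]
    set u : R[X] := -(C v * g.divX) with hu
    have h1 : X * g.divX = g - C (g.coeff 0) := by
      linear_combination X_mul_divX_add g
    have key : X * u - 1 = -C v * g := by
      rw [hu]; linear_combination (-(C v)) * h1 + hv1
    set f₁ : R[X] := f.divX + C (f.coeff 0) * u with hf1def
    have hb : f₁.natDegree + 1 ≤ k + g.natDegree := by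
      have h2 : f₁.natDegree ≤ max f.divX.natDegree (C (f.coeff 0) * u).natDegree :=
        natDegree_add_le _ _
      have h3 : f.divX.natDegree = f.natDegree - 1 := natDegree_divX_eq_natDegree_tsub_one
      have h4 : (C (f.coeff 0) * u).natDegree ≤ 0 + u.natDegree := natDegree_mul_le.trans
        (by gcongr; exact natDegree_C _ |>.le)
      have h5 : u.natDegree ≤ g.natDegree - 1 := by
        rw [hu, natDegree_neg]
        exact natDegree_mul_le.trans (by
          have := natDegree_divX_eq_natDegree_tsub_one (p := g)
          simp [this])
      omega
    obtain ⟨h, hdeg, hmem⟩ := ih f₁ hb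
    refine ⟨h, hdeg, ?_⟩
    have heq : f - X ^ (k + 1) * h
        = -C (f.coeff 0) * (X * u - 1) + X * (f₁ - X ^ k * h) := by
      rw [hf1def]; linear_combination -X_mul_divX_add f
    rw [heq, key]
    exact Ideal.add_mem _ (Ideal.mul_mem_left _ _ (Ideal.mul_mem_left _ _
      (Ideal.subset_span rfl))) (Ideal.mul_mem_left _ _ hmem)
end

section
/- Let R be a commutative unital ring, e(x) ∈ R[x] with deg e(x) ≥ 1 and e(0) a unit of R, and let (f₁(x), f₂(x), e(x)) be a unimodular row over R[x]. Then for every positive integer k, the row (f₁(x), f₂(x), e(x)) is equivalent under E₃(R[x]) to (x^k·f₁(x), x^k·f₂(x), e(x)). -/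
open Matrix Polynomial

private lemma rowEquivE_trans_s18 {ι R : Type} [Fintype ι] [DecidableEq ι] [CommRing R]
    {u v w : ι → R} (h1 : RowEquivE u v) (h2 : RowEquivE v w) : RowEquivE u w := by
  obtain ⟨E, hE, hvE⟩ := h1
  obtain ⟨F, hF, hvF⟩ := h2
  exact ⟨E * F, mul_mem hE hF, by rw [← Matrix.vecMul_vecMul, hvE, hvF]⟩

private lemma rowEquivE_step {R : Type} [CommRing R] (i j : Fin 3) (hij : i ≠ j) (l : R)
    (v : Fin 3 → R) : RowEquivE v (Matrix.vecMul v (Matrix.transvection i j l)) :=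
  ⟨Matrix.transvection i j l, Submonoid.subset_closure ⟨i, j, l, hij, rfl⟩, rfl⟩

private lemma req02 {R : Type} [CommRing R] {a b c : R} (l : R) {c' : R}
    (h : c' = c + a * l) : RowEquivE ![a, b, c] ![a, b, c'] := by
  have := rowEquivE_step (R := R) 0 2 (by decide) l ![a, b, c]
  convert this using 1
  funext i
  fin_cases i <;>
    simp [Matrix.vecMul, dotProduct, Fin.sum_univ_three, Matrix.transvection,
      Matrix.single, Matrix.one_apply, h] <;> ring

private lemma req12 {R : Type} [CommRing R] {a b c : R} (l : R) {c' : R}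
    (h : c' = c + b * l) : RowEquivE ![a, b, c] ![a, b, c'] := by
  have := rowEquivE_step (R := R) 1 2 (by decide) l ![a, b, c]
  convert this using 1
  funext i
  fin_cases i <;>
    simp [Matrix.vecMul, dotProduct, Fin.sum_univ_three, Matrix.transvection,
      Matrix.single, Matrix.one_apply, h] <;> ring

private lemma req20 {R : Type} [CommRing R] {a b c : R} (l : R) {a' : R}
    (h : a' = a + c * l) : RowEquivE ![a, b, c] ![a', b, c] := by
  have := rowEquivE_step (R := R) 2 0 (by decide) l ![a, b, c]
  convert this using 1
  funext i
  fin_cases i <;>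
    simp [Matrix.vecMul, dotProduct, Fin.sum_univ_three, Matrix.transvection,
      Matrix.single, Matrix.one_apply, h] <;> ring

private lemma req21 {R : Type} [CommRing R] {a b c : R} (l : R) {b' : R}
    (h : b' = b + c * l) : RowEquivE ![a, b, c] ![a, b', c] := by
  have := rowEquivE_step (R := R) 2 1 (by decide) l ![a, b, c]
  convert this using 1
  funext i
  fin_cases i <;>
    simp [Matrix.vecMul, dotProduct, Fin.sum_univ_three, Matrix.transvection,
      Matrix.single, Matrix.one_apply, h] <;> ring

theorem stmt_18 {R : Type} [CommRing R] (e f₁ f₂ : R[X])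
    (he : 1 ≤ e.natDegree) (h0 : IsUnit (e.coeff 0))
    (hum : IsUnimodular ![f₁, f₂, e]) (k : ℕ) (hk : 1 ≤ k) :
    RowEquivE ![f₁, f₂, e] ![X ^ k * f₁, X ^ k * f₂, e] := by
  classical
  -- Step 1: from unimodularity, get a Bezout identity r*f₁ + s*f₂ + w*e = 1.
  obtain ⟨r, s, w, hbez⟩ : ∃ r s w : R[X], r * f₁ + s * f₂ + w * e = 1 := by
    have h1 : (1 : R[X]) ∈ Ideal.span (Set.range ![f₁, f₂, e]) := by
      rw [hum]; trivial
    have hrange : Set.range ![f₁, f₂, e] = insert f₁ (insert f₂ {e}) := by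
      ext x
      simp only [Matrix.range_cons, Matrix.range_empty, Set.union_empty,
        Set.mem_insert_iff, Set.mem_singleton_iff, Set.insert_eq, Set.mem_union]
      try tauto
    rw [hrange, Ideal.mem_span_insert] at h1
    obtain ⟨a, z₀, hz₀, hz₁⟩ := h1
    rw [Ideal.mem_span_insert] at hz₀
    obtain ⟨b, z₁, hz₂, hz₃⟩ := hz₀
    rw [Ideal.mem_span_singleton] at hz₂
    obtain ⟨c, hc⟩ := hz₂
    exact ⟨a, b, c, by rw [hz₁, hz₃, hc]; ring⟩
  -- Step 2: since e(0) is a unit, X^k is invertible modulo e: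
  -- produce m, z with X^k * m + z * e = 1.
  obtain ⟨u, hu⟩ := h0
  set g : R[X] := 1 - C ((u⁻¹ : Rˣ) : R) * e with hg
  have hXg : X ∣ g := by
    rw [Polynomial.X_dvd_iff]
    simp [hg, Polynomial.coeff_C_mul, ← hu]
  obtain ⟨m, hm⟩ : ∃ m, g ^ k = X ^ k * m := pow_dvd_pow_of_dvd hXg k
  set z : R[X] := C ((u⁻¹ : Rˣ) : R) * (∑ i ∈ Finset.range k, g ^ i) with hz
  have hze : z * e = 1 - g ^ k := by
    have hgs := geom_sum_mul g k
    have h1g : C ((u⁻¹ : Rˣ) : R) * e = 1 - g := by rw [hg]; ring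
    calc z * e = (C ((u⁻¹ : Rˣ) : R) * e) * (∑ i ∈ Finset.range k, g ^ i) := by
            rw [hz]; ring
      _ = (1 - g) * (∑ i ∈ Finset.range k, g ^ i) := by rw [h1g]
      _ = 1 - g ^ k := by linear_combination -hgs
  have h1 : X ^ k * m + z * e = 1 := by
    rw [hze, ← hm]; ring
  -- Abbreviations for the intermediate rows.
  obtain ⟨Cc, hC⟩ : ∃ Cc : R[X], Cc = e + f₁ * r + f₂ * s := ⟨_, rfl⟩
  obtain ⟨a1, ha1⟩ : ∃ a1 : R[X], a1 = f₁ - m * s * Cc := ⟨_, rfl⟩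
  obtain ⟨a2, ha2⟩ : ∃ a2 : R[X], a2 = f₂ + m * r * Cc := ⟨_, rfl⟩
  obtain ⟨ρ, hρ⟩ : ∃ ρ : R[X], ρ = r - (X ^ k - 1) * a2 := ⟨_, rfl⟩
  obtain ⟨σ, hσ⟩ : ∃ σ : R[X], σ = s + (X ^ k - 1) * a1 := ⟨_, rfl⟩
  obtain ⟨b1, hb1⟩ : ∃ b1 : R[X], b1 = a1 + σ * Cc := ⟨_, rfl⟩
  obtain ⟨b2, hb2⟩ : ∃ b2 : R[X], b2 = a2 - ρ * Cc := ⟨_, rfl⟩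
  -- The chain of elementary moves.
  have s1 : RowEquivE ![f₁, f₂, e] ![f₁, f₂, e + f₁ * r] := req02 r rfl
  have s2 : RowEquivE ![f₁, f₂, e + f₁ * r] ![f₁, f₂, Cc] :=
    req12 s (by rw [hC])
  have s3 : RowEquivE ![f₁, f₂, Cc] ![a1, f₂, Cc] :=
    req20 (-(m * s)) (by rw [ha1]; ring)
  have s4 : RowEquivE ![a1, f₂, Cc] ![a1, a2, Cc] :=
    req21 (m * r) (by rw [ha2]; ring)
  have s5 : RowEquivE ![a1, a2, Cc] ![a1, a2, Cc + a1 * (-r)] := req02 (-r) rfl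
  have s6 : RowEquivE ![a1, a2, Cc + a1 * (-r)] ![a1, a2, e] :=
    req12 (-s) (by rw [ha1, ha2, hC]; ring)
  have s7 : RowEquivE ![a1, a2, e] ![a1, a2, e + a1 * ρ] := req02 ρ rfl
  have s8 : RowEquivE ![a1, a2, e + a1 * ρ] ![a1, a2, Cc] :=
    req12 σ (by rw [hρ, hσ, ha1, ha2, hC]; ring)
  have s9 : RowEquivE ![a1, a2, Cc] ![b1, a2, Cc] :=
    req20 σ (by rw [hb1]; ring)
  have s10 : RowEquivE ![b1, a2, Cc] ![b1, b2, Cc] :=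
    req21 (-ρ) (by rw [hb2]; ring)
  have s11 : RowEquivE ![b1, b2, Cc] ![b1, b2, Cc + b1 * (-ρ)] := req02 (-ρ) rfl
  have s12 : RowEquivE ![b1, b2, Cc + b1 * (-ρ)] ![b1, b2, e] :=
    req12 (-σ) (by rw [hb1, hb2, hρ, hσ, ha1, ha2, hC]; ring)
  have s13 : RowEquivE ![b1, b2, e] ![X ^ k * f₁, b2, e] := by
    refine req20
      (-((X ^ k - 1) * (1 - w) * f₁) +
        s * (e + f₁ * r + f₂ * s) * (m * (1 - w) * (X ^ k - 1) - z)) ?_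
    rw [hb1, hσ, ha1, hC]
    linear_combination
      (e ^ 2 * s * w + f₂ * e * s ^ 2 + f₂ * e * s ^ 2 * w + f₂ ^ 2 * s ^ 3 +
          f₁ * e * r * s + f₁ * e * r * s * w + 2 * f₁ * f₂ * r * s ^ 2 +
          f₁ ^ 2 * r ^ 2 * s) * h1 +
      (e * s - e * s * m - e ^ 2 * s * z + f₂ * s ^ 2 - f₂ * s ^ 2 * m -
          f₂ * e * s ^ 2 * z + f₁ - f₁ * X ^ k + f₁ * r * s - f₁ * r * s * m -
          f₁ * e * r * s * z) * hbez
  have s14 : RowEquivE ![X ^ k * f₁, b2, e] ![X ^ k * f₁, X ^ k * f₂, e] := by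
    refine req21
      (-((X ^ k - 1) * (1 - w) * f₂) +
        r * (e + f₁ * r + f₂ * s) * (z - m * (X ^ k - 1) * (1 - w))) ?_
    rw [hb2, hρ, ha2, hC]
    linear_combination
      (-(e ^ 2 * r * w) - f₂ * e * r * s - f₂ * e * r * s * w - f₂ ^ 2 * r * s ^ 2 -
          f₁ * e * r ^ 2 - f₁ * e * r ^ 2 * w - 2 * f₁ * f₂ * r ^ 2 * s -
          f₁ ^ 2 * r ^ 3) * h1 +
      (-(e * r) + e * r * m + e ^ 2 * r * z + f₂ - f₂ * X ^ k - f₂ * r * s +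
          f₂ * r * s * m + f₂ * e * r * s * z - f₁ * r ^ 2 + f₁ * r ^ 2 * m +
          f₁ * e * r ^ 2 * z) * hbez
  exact rowEquivE_trans_s18 s1 (rowEquivE_trans_s18 s2 (rowEquivE_trans_s18 s3 (rowEquivE_trans_s18 s4
    (rowEquivE_trans_s18 s5 (rowEquivE_trans_s18 s6 (rowEquivE_trans_s18 s7 (rowEquivE_trans_s18 s8
    (rowEquivE_trans_s18 s9 (rowEquivE_trans_s18 s10 (rowEquivE_trans_s18 s11 (rowEquivE_trans_s18 s12
    (rowEquivE_trans_s18 s13 s14))))))))))))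
end
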